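/- arXiv:1907.10724 — 4 statements merged into one kernel-verified Lean document; each statement's English description precedes it below -/
import Mathlib

section
/- Let r, s, L be nonnegative integers with s ≥ 1 and L ≥ 2s + r + 1. Then every (L,s,r) PPRIC code C has at least r + 3 codewords, i.e., |C| ≥ r + 3. -/
/-!
If `|C| ≤ r + 2`, pick one support position of each codeword and enlarge these positions to a set
`T` of exactly `r + 2` coordinates (possible since `L ≥ r + 2`). The word `y` with support `T`
meets the support of every codeword, so `d(c, y) = s + (r + 2) - 2 |supp c ∩ T| ≤ r + s` for all
`c ∈ C`. Hence `y ∈ ⋂ B(c, r + s) = B(0, r)`, contradicting `wt y = r + 2`.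
-/

/-- The Hamming ball of radius `ρ` centered at `x` in `𝔽₂^L`. -/
def pball (L : ℕ) (x : Fin L → ZMod 2) (ρ : ℕ) : Set (Fin L → ZMod 2) :=
  {y | hammingDist x y ≤ ρ}

/-- `C` is an `(L,s,r)` PPRIC code: a set of words of Hamming weight exactly `s`
such that `B(0,r) = ⋂_{c ∈ C} B(c, r+s)`. -/
def IsPPRIC (L s r : ℕ) (C : Set (Fin L → ZMod 2)) : Prop :=
  (∀ c ∈ C, hammingNorm c = s) ∧
  pball L 0 r = ⋂ c ∈ C, pball L c (r + s)

open Finset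

theorem hammingDist_add_two_mul_card_inter {ι : Type*} [Fintype ι] (x y : ι → ZMod 2) :
    hammingDist x y + 2 * #{i | x i ≠ 0 ∧ y i ≠ 0} = hammingNorm x + hammingNorm y := by
  have key : ∀ a b : ZMod 2, ((if a ≠ b then 1 else 0) + 2 * if a ≠ 0 ∧ b ≠ 0 then 1 else 0) =
      (if a ≠ 0 then 1 else 0) + if b ≠ 0 then 1 else 0 := by decide
  simp only [hammingDist, hammingNorm, card_filter, mul_sum, ← sum_add_distrib]
  exact sum_congr rfl fun i _ => key (x i) (y i)

theorem exists_card_eq_forall_exists_mem_ne_zero {ι M : Type*} [Fintype ι] [Zero M]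
    (C : Finset (ι → M)) (hC : ∀ c ∈ C, c ≠ 0) {k : ℕ} (hCk : #C ≤ k)
    (hk : k ≤ Fintype.card ι) : ∃ T : Finset ι, #T = k ∧ ∀ c ∈ C, ∃ i ∈ T, c i ≠ 0 := by
  classical
  choose f hf using fun c hc => Function.ne_iff.1 (hC c hc)
  obtain ⟨T, hsub, -, hT⟩ := exists_subsuperset_card_eq
    (subset_univ (C.attach.image fun c : C => f c c.2))
    (card_image_le.trans (by simpa using hCk)) (by simpa using hk)
  exact ⟨T, hT, fun c hc => ⟨f c hc, hsub (mem_image_of_mem _ (mem_attach _ ⟨c, hc⟩)), hf c hc⟩⟩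

theorem hammingNorm_ite_mem {ι : Type*} [Fintype ι] [DecidableEq ι] (T : Finset ι) :
    hammingNorm (fun i => if i ∈ T then (1 : ZMod 2) else 0) = #T := by
  simp [hammingNorm]

theorem hammingDist_ite_mem_add_two_le {ι : Type*} [Fintype ι] [DecidableEq ι] (c : ι → ZMod 2)
    (T : Finset ι) (hcT : ∃ i ∈ T, c i ≠ 0) :
    hammingDist c (fun i => if i ∈ T then 1 else 0) + 2 ≤ hammingNorm c + #T := by
  obtain ⟨i, hiT, hci⟩ := hcT
  have hmeet : 1 ≤ #{j | c j ≠ 0 ∧ (if j ∈ T then (1 : ZMod 2) else 0) ≠ 0} :=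
    card_pos.2 ⟨i, by simp [hiT, hci]⟩
  have := hammingDist_add_two_mul_card_inter c fun i => if i ∈ T then 1 else 0
  rw [hammingNorm_ite_mem] at this
  omega

theorem stmt2 (L r s : ℕ) (hs : 1 ≤ s) (hL : 2 * s + r + 1 ≤ L)
    (C : Finset (Fin L → ZMod 2)) (hC : IsPPRIC L s r ↑C) :
    r + 3 ≤ C.card := by
  by_contra! hcard
  have hnonzero : ∀ c ∈ C, c ≠ 0 := fun c hc =>
    hammingNorm_ne_zero_iff.1 (by rw [hC.1 c hc]; omega)
  obtain ⟨T, hT, hmeet⟩ :=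
    exists_card_eq_forall_exists_mem_ne_zero C hnonzero (k := r + 2) (by omega) (by rw [Fintype.card_fin]; omega)
  have hy : (fun i => if i ∈ T then 1 else 0) ∈ ⋂ c ∈ (C : Set (Fin L → ZMod 2)),
      pball L c (r + s) := by
    refine Set.mem_iInter₂.2 fun c hc => ?_
    have := hammingDist_ite_mem_add_two_le c T (hmeet c hc)
    rw [hC.1 c hc, hT] at this
    exact show _ ≤ r + s by omega
  rw [← hC.2, pball, Set.mem_ofPred_eq, hammingDist_zero_left, hammingNorm_ite_mem] at hy
  omega
end

section
/- Let r, s, L be nonnegative integers with s ≥ 1, L ≥ 2s + r + 1 and L ≥ (r+3)s. Then there exists an (L,s,r) PPRIC code C with exactly r + 3 codewords; in fact any collection of r + 3 vectors of weight s with pairwise disjoint supports is such a code. -/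
/-!
If `wt y = n` and `d(c, y) ≤ r + s` for a word `c` of weight `s`, then `n ≤ r + 2 a_c`, where
`a_c` is the size of the overlap of the supports of `c` and `y`; in particular every overlap is
nonempty when `n > r`. For `m ≥ r + 3` words with disjoint supports the overlaps are disjoint
subsets of `supp y`, so `m ≤ ∑ a_c ≤ n`, while summing the bounds gives `m n ≤ m r + 2 n`.
Together these force `m ≤ r + 2`, so every `y` in the intersection of the balls has weight at most `r`.
Words of weight `s` with disjoint supports exist as soon as `(r + 3) s ≤ L`.
-/

open Finset Function

section Support

variable {ι : Type*} [Fintype ι] {β : ι → Type*} [∀ i, DecidableEq (β i)] [∀ i, Zero (β i)]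

def hammingSupport (x : ∀ i, β i) : Finset ι := {i | x i ≠ 0}

theorem hammingNorm_eq_card_hammingSupport (x : ∀ i, β i) :
    hammingNorm x = #(hammingSupport x) :=
  rfl

theorem disjoint_hammingSupport_iff {x y : ∀ i, β i} :
    Disjoint (hammingSupport x) (hammingSupport y) ↔ ∀ i, x i = 0 ∨ y i = 0 := by
  simp only [hammingSupport, disjoint_filter, mem_univ, true_implies, not_not, or_iff_not_imp_left]

variable [DecidableEq ι]

theorem hammingNorm_add_hammingNorm_le (x y : ∀ i, β i) :
    hammingNorm x + hammingNorm y
      ≤ hammingDist x y + 2 * #(hammingSupport x ∩ hammingSupport y) := by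
  set X := hammingSupport x
  set Y := hammingSupport y
  have hsymm : #(X \ Y) + #(Y \ X) ≤ hammingDist x y := by
    rw [← card_union_of_disjoint disjoint_sdiff_sdiff]
    refine card_le_card fun i hi => ?_
    simp only [X, Y, hammingSupport, mem_union, mem_sdiff, mem_filter, mem_univ, true_and,
      not_not] at hi
    simp only [mem_filter, mem_univ, true_and]
    rcases hi with ⟨hx, hy⟩ | ⟨hy, hx⟩
    · rwa [hy]
    · rw [hx]; exact Ne.symm hy
  have hX := card_sdiff_add_card_inter X Y
  have hY := card_sdiff_add_card_inter Y X
  rw [inter_comm] at hY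
  change #X + #Y ≤ _
  omega

theorem hammingNorm_le_of_forall_hammingDist_le {r s : ℕ} {C : Finset (∀ i, β i)}
    (hcard : r + 3 ≤ #C) (hwt : ∀ c ∈ C, hammingNorm c = s)
    (hdisj : (C : Set (∀ i, β i)).PairwiseDisjoint hammingSupport) {y : ∀ i, β i}
    (hy : ∀ c ∈ C, hammingDist c y ≤ r + s) :
    hammingNorm y ≤ r := by
  by_contra! hyr
  set n := hammingNorm y
  set a : (∀ i, β i) → ℕ := fun c => #(hammingSupport c ∩ hammingSupport y)
  have hna : ∀ c ∈ C, n ≤ r + 2 * a c := fun c hc => by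
    change n ≤ r + 2 * #(hammingSupport c ∩ hammingSupport y)
    have := hammingNorm_add_hammingNorm_le c y
    rw [hwt c hc] at this
    have := hy c hc
    omega
  have hsum_le : ∑ c ∈ C, a c ≤ n := by
    rw [← card_biUnion (fun c hc c' hc' hne => (hdisj hc hc' hne).mono inter_subset_left
      inter_subset_left)]
    exact card_le_card (biUnion_subset.2 fun c _ => inter_subset_right)
  have hcard_le : #C ≤ ∑ c ∈ C, a c := by
    simpa using card_nsmul_le_sum C a 1 fun c hc => by have := hna c hc; omega
  have hmul : #C * n ≤ #C * r + 2 * ∑ c ∈ C, a c := by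
    calc #C * n = ∑ _c ∈ C, n := by rw [sum_const, smul_eq_mul]
      _ ≤ ∑ c ∈ C, (r + 2 * a c) := sum_le_sum hna
      _ = #C * r + 2 * ∑ c ∈ C, a c := by rw [sum_add_distrib, sum_const, smul_eq_mul, mul_sum]
  nlinarith

end Support

section Construction

variable {ι : Type*} [Fintype ι]

theorem exists_pairwiseDisjoint_card_eq {m s : ℕ} (h : m * s ≤ Fintype.card ι) :
    ∃ B : Fin m → Finset ι, Pairwise (Disjoint on B) ∧ ∀ j, #(B j) = s := by
  obtain ⟨φ⟩ := Embedding.nonempty_of_card_le (α := Fin m × Fin s) (β := ι) (by simpa)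
  refine ⟨fun j => ({j} ×ˢ univ).map φ, fun j j' hne => ?_, fun j => by simp⟩
  rw [onFun, disjoint_map, disjoint_product]
  exact .inl (disjoint_singleton.2 hne)

variable [DecidableEq ι]

def indicatorWord (S : Finset ι) : ι → ZMod 2 := fun i => if i ∈ S then 1 else 0

theorem hammingSupport_indicatorWord (S : Finset ι) : hammingSupport (indicatorWord S) = S := by
  ext i
  by_cases hi : i ∈ S <;> simp [hammingSupport, indicatorWord, hi]

theorem exists_card_eq_pairwiseDisjoint_hammingSupport {m s : ℕ} (hs : 1 ≤ s)
    (h : m * s ≤ Fintype.card ι) :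
    ∃ C : Finset (ι → ZMod 2), #C = m ∧ (∀ c ∈ C, hammingNorm c = s) ∧
      (C : Set (ι → ZMod 2)).PairwiseDisjoint hammingSupport := by
  obtain ⟨B, hdisj, hcard⟩ := exists_pairwiseDisjoint_card_eq h
  have hB : Injective B := fun j j' hjj' => by
    by_contra hne
    obtain ⟨i, hi⟩ : (B j).Nonempty := card_pos.1 (by rw [hcard j]; omega)
    exact disjoint_left.1 (hdisj hne) hi (hjj' ▸ hi)
  have hword : Injective (indicatorWord ∘ B) :=
    (LeftInverse.injective hammingSupport_indicatorWord).comp hB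
  refine ⟨univ.image (indicatorWord ∘ B), by simp [card_image_of_injective _ hword], ?_, ?_⟩
  · simp [hammingNorm_eq_card_hammingSupport, hammingSupport_indicatorWord, hcard]
  · rintro _ hc _ hc' hne
    simp only [coe_image, coe_univ, Set.image_univ, Set.mem_range, comp_apply] at hc hc'
    obtain ⟨j, rfl⟩ := hc
    obtain ⟨j', rfl⟩ := hc'
    simpa [onFun, hammingSupport_indicatorWord] using hdisj fun h => hne (by rw [h])

end Construction

theorem isPPRIC_of_pairwiseDisjoint {L r s : ℕ} {C : Finset (Fin L → ZMod 2)}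
    (hcard : r + 3 ≤ #C) (hwt : ∀ c ∈ C, hammingNorm c = s)
    (hdisj : (C : Set (Fin L → ZMod 2)).PairwiseDisjoint hammingSupport) :
    IsPPRIC L s r C := by
  refine ⟨hwt, Set.Subset.antisymm (fun y hy => ?_) fun y hy => ?_⟩
  · simp only [pball, Set.mem_iInter, Set.mem_ofPred_eq, mem_coe] at hy ⊢
    intro c hc
    calc hammingDist c y ≤ hammingDist c 0 + hammingDist 0 y := hammingDist_triangle c 0 y
      _ ≤ r + s := by rw [hammingDist_zero_right, hwt c hc, add_comm]; omega
  · simp only [pball, Set.mem_iInter, Set.mem_ofPred_eq, mem_coe, hammingDist_zero_left] at hy ⊢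
    exact hammingNorm_le_of_forall_hammingDist_le hcard hwt hdisj hy

theorem stmt8_general (L r s : ℕ) (hs : 1 ≤ s)
    (hL2 : (r + 3) * s ≤ L) :
    (∃ C : Finset (Fin L → ZMod 2), C.card = r + 3 ∧ IsPPRIC L s r ↑C) ∧
    (∀ C : Finset (Fin L → ZMod 2), C.card = r + 3 →
      (∀ c ∈ C, hammingNorm c = s) →
      (∀ c ∈ C, ∀ c' ∈ C, c ≠ c' → ∀ i : Fin L, c i = 0 ∨ c' i = 0) →
      IsPPRIC L s r ↑C) := by
  constructor
  · obtain ⟨C, hcard, hwt, hdisj⟩ :=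
      exists_card_eq_pairwiseDisjoint_hammingSupport (ι := Fin L) (m := r + 3) hs
        (by simpa using hL2)
    exact ⟨C, hcard, isPPRIC_of_pairwiseDisjoint hcard.ge hwt hdisj⟩
  · intro C hcard hwt hdisj
    exact isPPRIC_of_pairwiseDisjoint hcard.ge hwt fun c hc c' hc' hne =>
      disjoint_hammingSupport_iff.2 (hdisj c hc c' hc' hne)

theorem stmt8 (L r s : ℕ) (hs : 1 ≤ s) (hL1 : 2 * s + r + 1 ≤ L)
    (hL2 : (r + 3) * s ≤ L) :
    (∃ C : Finset (Fin L → ZMod 2), C.card = r + 3 ∧ IsPPRIC L s r ↑C) ∧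
    (∀ C : Finset (Fin L → ZMod 2), C.card = r + 3 →
      (∀ c ∈ C, hammingNorm c = s) →
      (∀ c ∈ C, ∀ c' ∈ C, c ≠ c' → ∀ i : Fin L, c i = 0 ∨ c' i = 0) →
      IsPPRIC L s r ↑C) :=
  stmt8_general L r s hs hL2
end

section
/- Let r be an odd positive integer, let k ≥ 1 and 0 ≤ t ≤ (r+1)/2 be integers, and let s, L be positive integers such that k(k+1) divides s and 2k(k+1)·L ≥ ((r+3)(k+1)² − 2t)·s. Then there exists an (L,s,r) PPRIC code with exactly ((r+3)(k+1))/2 + t codewords. -/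
open Finset Function

section CharVec
variable {α : Type*} [DecidableEq α]

def charVec (S : Finset α) : α → ZMod 2 := fun x => if x ∈ S then 1 else 0

lemma charVec_injective : Injective (charVec (α := α)) := by
  intro S T h
  ext x
  have := congrFun h x
  by_cases hS : x ∈ S <;> by_cases hT : x ∈ T <;> simp_all [charVec]

variable [Fintype α]

lemma hammingNorm_charVec (S : Finset α) : hammingNorm (charVec S) = #S := by
  simp [hammingNorm, charVec]

lemma hammingDist_charVec_add (S : Finset α) (y : α → ZMod 2) :
    hammingDist (charVec S) y + 2 * #{x ∈ S | y x ≠ 0} = #S + hammingNorm y := by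
  set Y : Finset α := {x | y x ≠ 0}
  have hdisagree : ({x | charVec S x ≠ y x} : Finset α) = (S ∪ Y) \ (S ∩ Y) := by
    ext x
    simp only [mem_filter_univ]
    rcases (by decide : ∀ a : ZMod 2, a = 0 ∨ a = 1) (y x) with h | h <;>
      by_cases hx : x ∈ S <;> simp [charVec, Y, hx, h]
  have hcommon : ({x ∈ S | y x ≠ 0} : Finset α) = S ∩ Y := by ext; simp [Y]
  have hsdiff := card_sdiff_add_card_inter (S ∪ Y) (S ∩ Y)
  have hunion := card_union_add_card_inter S Y
  rw [inter_eq_right.2 inter_subset_union] at hsdiff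
  rw [hammingDist, hdisagree, hcommon]
  change _ = #S + #Y
  omega

end CharVec

lemma sum_card_filter_le_of_pairwise_disjoint {ι α : Type*} [Fintype ι] [Fintype α]
    [DecidableEq α] {A : ι → Finset α} (hA : Pairwise (Disjoint on A)) (p : α → Prop)
    [DecidablePred p] : ∑ d, #{x ∈ A d | p x} ≤ #{x | p x} := by
  rw [← card_biUnion fun d _ e _ hde => disjoint_filter_filter (hA hde)]
  exact card_le_card fun x hx => by
    obtain ⟨d, -, hx⟩ := mem_biUnion.1 hx
    simpa using (mem_filter.1 hx).2

lemma exists_pairwise_disjoint_card_eq {ι α : Type*} [Fintype ι] [Fintype α] (n : ι → ℕ)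
    (h : ∑ i, n i ≤ Fintype.card α) :
    ∃ A : ι → Finset α, Pairwise (Disjoint on A) ∧ ∀ i, #(A i) = n i := by
  obtain ⟨e⟩ : Nonempty ((Σ i, Fin (n i)) ↪ α) :=
    Function.Embedding.nonempty_of_card_le (by simpa using h)
  refine ⟨fun i => univ.map ((Embedding.sigmaMk i).trans e), fun i j hij => ?_, fun i => by simp⟩
  simp only [disjoint_left, mem_map, mem_univ, true_and, Embedding.trans_apply,
    Embedding.sigmaMk_apply, not_exists]
  rintro _ ⟨a, rfl⟩ b hab
  exact hij (Sigma.mk.inj (e.injective hab)).1.symm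

lemma exists_two_mul_sum_erase_lt {G : Type*} [Fintype G] {β : G → Type*}
    [∀ i, Fintype (β i)] [∀ i, Nonempty (β i)] [∀ i, DecidableEq (β i)]
    (x : (Σ i, β i) → ℕ) {r w : ℕ} (hr : 0 < r) (hG : r + 3 ≤ 2 * Fintype.card G)
    (hx : ∑ c, x c ≤ w) (hw : r < w) :
    ∃ c : Σ i, β i, r + 2 * ∑ j ∈ univ.erase c.2, x ⟨c.1, j⟩ < w := by
  choose top htop using fun i => Finite.exists_max (fun j : β i => x ⟨i, j⟩)
  set rest : G → ℕ := fun i => ∑ j ∈ univ.erase (top i), x ⟨i, j⟩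
  by_contra! hbig
  replace hbig (i : G) : w ≤ r + 2 * rest i := hbig ⟨i, top i⟩
  have hrest_pos (i : G) : 0 < rest i := by have := hbig i; omega
  have hgroup (i : G) : rest i + 1 ≤ ∑ j, x ⟨i, j⟩ := by
    obtain ⟨j, -, hj⟩ := exists_ne_zero_of_sum_ne_zero (hrest_pos i).ne'
    rw [← add_sum_erase _ _ (mem_univ (top i)), add_comm]
    gcongr
    exact (Nat.one_le_iff_ne_zero.2 hj).trans (htop i j)
  have : Nonempty G := Fintype.card_pos_iff.1 (by omega)
  obtain ⟨i₀, hi₀⟩ := Finite.exists_min rest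
  have hcount : Fintype.card G * (rest i₀ + 1) ≤ w := calc
    Fintype.card G * (rest i₀ + 1) = ∑ _i : G, (rest i₀ + 1) := by simp
    _ ≤ ∑ i, ∑ j, x ⟨i, j⟩ :=
      sum_le_sum fun i _ => (Nat.add_le_add_right (hi₀ i) 1).trans (hgroup i)
    _ = ∑ c, x c := (Fintype.sum_sigma _).symm
    _ ≤ w := hx
  nlinarith [hrest_pos i₀, hbig i₀]

section SiblingUnion
variable {α G : Type*} [DecidableEq α] {β : G → Type*} [∀ i, Fintype (β i)]
  [∀ i, DecidableEq (β i)]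

def siblingUnion (A : (Σ i, β i) → Finset α) (c : Σ i, β i) : Finset α :=
  (univ.erase c.2).biUnion fun j => A ⟨c.1, j⟩

variable {A : (Σ i, β i) → Finset α}

lemma card_siblingUnion (hA : Pairwise (Disjoint on A)) (c : Σ i, β i) :
    #(siblingUnion A c) = ∑ j ∈ univ.erase c.2, #(A ⟨c.1, j⟩) :=
  card_biUnion fun _ _ _ _ hj => hA fun h => hj (eq_of_heq (Sigma.mk.inj h).2)

lemma filter_siblingUnion (p : α → Prop) [DecidablePred p] (c : Σ i, β i) :
    {x ∈ siblingUnion A c | p x} = siblingUnion (fun d => {x ∈ A d | p x}) c :=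
  filter_biUnion _ _ _

lemma mem_siblingUnion (hA : Pairwise (Disjoint on A)) {x : α} {d : Σ i, β i} (hx : x ∈ A d)
    (c : Σ i, β i) : x ∈ siblingUnion A c ↔ d.1 = c.1 ∧ d ≠ c := by
  have hcell (e : Σ i, β i) : x ∈ A e ↔ e = d :=
    ⟨fun he => by_contra fun hed => disjoint_left.1 (hA hed) he hx, fun h => h ▸ hx⟩
  obtain ⟨i, j⟩ := c
  obtain ⟨i', j'⟩ := d
  simp only [siblingUnion, mem_biUnion, mem_erase, mem_univ, and_true, hcell]
  constructor
  · rintro ⟨j'', hj'', h⟩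
    cases h
    exact ⟨rfl, fun h => hj'' (eq_of_heq (Sigma.mk.inj h).2)⟩
  · rintro ⟨rfl, h⟩
    exact ⟨j', fun h' => h (h' ▸ rfl), rfl⟩

lemma siblingUnion_injective [∀ i, Nontrivial (β i)] (hA : Pairwise (Disjoint on A))
    (hne : ∀ c, (A c).Nonempty) : Injective (siblingUnion A) := by
  intro c d hcd
  obtain ⟨j, hj⟩ := exists_ne c.2
  obtain ⟨x, hx⟩ := hne ⟨c.1, j⟩
  have hgroup : c.1 = d.1 := by
    have := (mem_siblingUnion hA hx c).2 ⟨rfl, fun h => hj (eq_of_heq (Sigma.mk.inj h).2)⟩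
    rw [hcd, mem_siblingUnion hA hx d] at this
    exact this.1
  by_contra hcd'
  obtain ⟨y, hy⟩ := hne c
  have := (mem_siblingUnion hA hy d).2 ⟨hgroup, hcd'⟩
  rw [← hcd, mem_siblingUnion hA hy c] at this
  exact this.2 rfl

end SiblingUnion

theorem isPPRIC_range_charVec_siblingUnion {G : Type*} [Fintype G] {β : G → Type*}
    [∀ i, Fintype (β i)] [∀ i, Nonempty (β i)] [∀ i, DecidableEq (β i)] {L s r : ℕ}
    {A : (Σ i, β i) → Finset (Fin L)} (hA : Pairwise (Disjoint on A))
    (hs : ∀ c, #(siblingUnion A c) = s) (hr : 0 < r) (hG : r + 3 ≤ 2 * Fintype.card G) :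
    IsPPRIC L s r (Set.range fun c => charVec (siblingUnion A c)) := by
  refine ⟨by rintro _ ⟨c, rfl⟩; rw [hammingNorm_charVec, hs], ?_⟩
  ext y
  simp only [Set.biInter_range, pball, Set.mem_ofPred_eq, Set.mem_iInter, hammingDist_zero_left]
  constructor
  · intro hy c
    have htri := hammingDist_triangle (charVec (siblingUnion A c)) 0 y
    rw [hammingDist_zero_right, hammingNorm_charVec, hs, hammingDist_zero_left] at htri
    omega
  · intro hy
    by_contra! hw
    obtain ⟨c, hc⟩ := exists_two_mul_sum_erase_lt (fun d => #{x ∈ A d | y x ≠ 0})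
      (w := hammingNorm y) hr hG (sum_card_filter_le_of_pairwise_disjoint hA _) hw
    have hdist := hammingDist_charVec_add (siblingUnion A c) y
    rw [filter_siblingUnion, card_siblingUnion
      (fun d e hde => disjoint_filter_filter (hA hde)), hs] at hdist
    linarith [hy c]

theorem exists_isPPRIC_card_eq_sum {G : Type*} [Fintype G] {L s r : ℕ} (m n : G → ℕ)
    (hm : ∀ i, 2 ≤ m i) (hn : ∀ i, 0 < n i) (hs : ∀ i, (m i - 1) * n i = s)
    (hL : ∑ i, m i * n i ≤ L) (hr : 0 < r) (hG : r + 3 ≤ 2 * Fintype.card G) :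
    ∃ C : Finset (Fin L → ZMod 2), IsPPRIC L s r C ∧ #C = ∑ i, m i := by
  have (i : G) : Nontrivial (Fin (m i)) := Fin.nontrivial_iff_two_le.2 (hm i)
  obtain ⟨A, hA, hcard⟩ := exists_pairwise_disjoint_card_eq (α := Fin L)
    (fun c : Σ i, Fin (m i) => n c.1) (by simpa [Fintype.sum_sigma] using hL)
  have hsib (c : Σ i, Fin (m i)) : #(siblingUnion A c) = s := by
    simp [card_siblingUnion hA, hcard, hs]
  have hinj : Injective fun c => charVec (siblingUnion A c) :=
    charVec_injective.comp (siblingUnion_injective hA fun c => card_pos.1 (hcard c ▸ hn c.1))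
  refine ⟨univ.image fun c => charVec (siblingUnion A c), ?_, ?_⟩
  · rw [coe_image, coe_univ, Set.image_univ]
    exact isPPRIC_range_charVec_siblingUnion hA hsib hr hG
  · simp [card_image_of_injective _ hinj]

theorem stmt12_general (r k t s L : ℕ) (hr : Odd r) (hk : 1 ≤ k)
    (ht : t ≤ (r + 1) / 2) (hs : 0 < s)
    (hdvd : k * (k + 1) ∣ s)
    (hineq : ((r + 3) * (k + 1) ^ 2 - 2 * t) * s ≤ 2 * k * (k + 1) * L) :
    ∃ C : Finset (Fin L → ZMod 2),
      IsPPRIC L s r ↑C ∧ C.card = ((r + 3) * (k + 1)) / 2 + t := by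
  obtain ⟨v, rfl⟩ := hr
  obtain ⟨u, rfl⟩ := hdvd
  have hu : 0 < u := Nat.pos_of_mul_pos_left hs
  obtain ⟨d, hd⟩ : ∃ d, v + 2 = t + d := ⟨v + 2 - t, by omega⟩
  have hlength : t * ((k + 2) * (k * u)) + d * ((k + 1) * ((k + 1) * u)) ≤ L := by
    have hcoeff : (2 * v + 1 + 3) * (k + 1) ^ 2 - 2 * t
        = 2 * (t * ((k + 2) * k) + d * ((k + 1) * (k + 1))) := by
      rw [show 2 * v + 1 + 3 = 2 * (t + d) by omega]
      exact Nat.sub_eq_of_eq_add (by ring)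
    rw [hcoeff] at hineq
    refine Nat.le_of_mul_le_mul_left (c := 2 * k * (k + 1)) ?_ (by positivity)
    linarith
  obtain ⟨C, hC, hcard⟩ := exists_isPPRIC_card_eq_sum (G := Fin t ⊕ Fin d) (L := L)
    (s := k * (k + 1) * u) (r := 2 * v + 1)
    (Sum.elim (fun _ => k + 2) fun _ => k + 1) (Sum.elim (fun _ => k * u) fun _ => (k + 1) * u)
    (by rintro (_ | _) <;> simp [hk]) (by rintro (_ | _) <;> simp [hu]; omega)
    (by rintro (_ | _) <;> simp <;> ring) (by simpa [Fintype.sum_sum_type] using hlength)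
    (by omega) (by simp; omega)
  refine ⟨C, hC, ?_⟩
  rw [hcard, show (2 * v + 1 + 3) * (k + 1) = 2 * ((t + d) * (k + 1)) by rw [← hd]; ring]
  simp [Fintype.sum_sum_type]
  ring

theorem stmt12 (r k t s L : ℕ) (hr : Odd r) (hrpos : 0 < r) (hk : 1 ≤ k)
    (ht : t ≤ (r + 1) / 2) (hs : 0 < s) (hL : 0 < L)
    (hdvd : k * (k + 1) ∣ s)
    (hineq : ((r + 3) * (k + 1) ^ 2 - 2 * t) * s ≤ 2 * k * (k + 1) * L) :
    ∃ C : Finset (Fin L → ZMod 2),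
      IsPPRIC L s r ↑C ∧ C.card = ((r + 3) * (k + 1)) / 2 + t :=
  stmt12_general r k t s L hr hk ht hs hdvd hineq
end

section
/- Let r, s, L be nonnegative integers with s ≥ 1 and L ≥ 2s + r + 1, let q ≥ 2 be an integer, and let C be a q-ary (L,s,r) PPRIC code in Fin L → Fin q. If v ∈ (Fin L → Fin q) has the property that for every c ∈ C there exists a coordinate i with v_i = c_i ≠ 0, then wt(v) ≥ r + 3. -/
/-!
If `wt(v) ≤ r + 2`, extend `v` to a word `y` of weight exactly `r + 2` that agrees with `v` on
the support of `v`. Every `c ∈ C` then shares a nonzero coordinate with `y`, and two words sharing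
a nonzero coordinate are at distance at most `wt(c) + wt(y) - 2 = r + s`. So `y` lies in every
ball of the PPRIC intersection, forcing `wt(y) ≤ r`, a contradiction.
-/

/-- Hamming weight in the `q`-ary Hamming space: the number of nonzero coordinates. -/
def qwt (q L : ℕ) (y : Fin L → Fin q) : ℕ :=
  (Finset.univ.filter (fun i => (y i : ℕ) ≠ 0)).card

/-- `C` is a `q`-ary `(L,s,r)` PPRIC code: a set of words of weight exactly `s` with
`{y | wt(y) ≤ r} = ⋂_{c ∈ C} {y | d(c,y) ≤ r+s}`. -/
def IsQPPRIC (q L s r : ℕ) (C : Set (Fin L → Fin q)) : Prop :=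
  (∀ c ∈ C, qwt q L c = s) ∧
  {y : Fin L → Fin q | qwt q L y ≤ r} =
    ⋂ c ∈ C, {y : Fin L → Fin q | hammingDist c y ≤ r + s}

open Finset

section Hamming

variable {ι : Type*} [Fintype ι] [DecidableEq ι] {β : ι → Type*} [∀ i, Zero (β i)]
  [∀ i, DecidableEq (β i)]

theorem hammingDist_add_two_le_hammingNorm_add {x y : ∀ i, β i} {i : ι}
    (hxy : x i = y i) (hx : x i ≠ 0) :
    hammingDist x y + 2 ≤ hammingNorm x + hammingNorm y := by
  have hy : y i ≠ 0 := hxy ▸ hx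
  have hsub : ({j | x j ≠ y j} : Finset ι) ⊆
      ({j | x j ≠ 0} : Finset ι).erase i ∪ ({j | y j ≠ 0} : Finset ι).erase i := by
    intro j hj
    simp only [mem_filter, mem_univ, true_and] at hj
    have hji : j ≠ i := by rintro rfl; exact hj hxy
    by_cases hxj : x j = 0
    · exact mem_union_right _ (by simp [hji, ← hxj, Ne.symm hj])
    · exact mem_union_left _ (by simp [hji, hxj])
  have hcard := (card_le_card hsub).trans (card_union_le _ _)
  have hx_erase := card_erase_add_one (show i ∈ ({j | x j ≠ 0} : Finset ι) by simpa using hx)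
  have hy_erase := card_erase_add_one (show i ∈ ({j | y j ≠ 0} : Finset ι) by simpa using hy)
  unfold hammingDist hammingNorm
  omega

theorem exists_hammingNorm_eq_of_agree_on_support [∀ i, Nontrivial (β i)] (x : ∀ i, β i)
    {n : ℕ} (hxn : hammingNorm x ≤ n) (hn : n ≤ Fintype.card ι) :
    ∃ y : ∀ i, β i, hammingNorm y = n ∧ ∀ i, x i ≠ 0 → y i = x i := by
  obtain ⟨T, hxT, -, hT⟩ := exists_subsuperset_card_eq (subset_univ _) hxn (by simpa using hn)
  choose b hb using fun i => exists_ne (0 : β i)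
  refine ⟨fun i => if i ∈ T ∧ x i = 0 then b i else x i, ?_, fun i hi => by simp [hi]⟩
  rw [← hT, hammingNorm]
  congr 1
  ext i
  by_cases hxi : x i = 0
  · simp [hxi, hb]
  · simpa [hxi] using hxT (by simpa using hxi)

end Hamming

theorem qwt_eq_hammingNorm {q L : ℕ} [NeZero q] (y : Fin L → Fin q) :
    qwt q L y = hammingNorm y := by
  simp only [qwt, hammingNorm, Fin.val_ne_zero_iff]

theorem IsQPPRIC.qwt_le_of_forall_hammingDist_le {q L s r : ℕ} {C : Set (Fin L → Fin q)}
    (hC : IsQPPRIC q L s r C) {y : Fin L → Fin q} (hy : ∀ c ∈ C, hammingDist c y ≤ r + s) :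
    qwt q L y ≤ r := by
  have hmem : y ∈ ⋂ c ∈ C, {y : Fin L → Fin q | hammingDist c y ≤ r + s} :=
    Set.mem_iInter₂.2 hy
  rwa [← hC.2] at hmem

theorem stmt16 (L r s q : ℕ) (hs : 1 ≤ s) (hL : 2 * s + r + 1 ≤ L) (hq : 2 ≤ q)
    (C : Set (Fin L → Fin q)) (hC : IsQPPRIC q L s r C)
    (v : Fin L → Fin q)
    (hv : ∀ c ∈ C, ∃ i : Fin L, v i = c i ∧ (c i : ℕ) ≠ 0) :
    r + 3 ≤ qwt q L v := by
  have : NeZero q := ⟨by omega⟩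
  have : Nontrivial (Fin q) := Fin.nontrivial_iff_two_le.2 hq
  by_contra! hv_small
  rw [qwt_eq_hammingNorm] at hv_small
  obtain ⟨y, hy, hyv⟩ := exists_hammingNorm_eq_of_agree_on_support v (n := r + 2)
    (by omega) (by rw [Fintype.card_fin]; omega)
  have hball : ∀ c ∈ C, hammingDist c y ≤ r + s := by
    intro c hc
    obtain ⟨i, hvc, hc0⟩ := hv c hc
    have hc0 : c i ≠ 0 := Fin.val_ne_zero_iff.1 hc0
    have hcy : c i = y i := by rw [hyv i (hvc ▸ hc0), hvc]
    have := hammingDist_add_two_le_hammingNorm_add hcy hc0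
    rw [← qwt_eq_hammingNorm, hC.1 c hc] at this
    omega
  have := hC.qwt_le_of_forall_hammingDist_le hball
  rw [qwt_eq_hammingNorm] at this
  omega
end
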